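/- (Alpers–Tijdeman: PTE solutions from switching components) Let m ∈ ℕ, let 𝓛 be a set of m + 1 pairwise distinct lattice lines in ℝ², and let X, Y ⊆ ℤ² be distinct finite sets that are tomographically equivalent with respect to 𝓛. Then |X| = |Y| and for every c ∈ ℤ² and every j with 1 ≤ j ≤ m, Σ_{x ∈ X} (cᵀx)^j = Σ_{y ∈ Y} (cᵀy)^j. In particular, if the multisets Π_c(X) = {cᵀx : x ∈ X} and Π_c(Y) = {cᵀy : y ∈ Y} are distinct, then (Π_c(X), Π_c(Y)) is a degree-m solution of the Prouhet–Tarry–Escott problem. -/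

import Mathlib

open Set

variable {d : ℕ}

/-- The affine line through the coset `T` of the modulo-`S` quotient, i.e. an affine
line parallel to `S` when `S` is 1-dimensional. -/
def fiber (S : Submodule ℝ (Fin d → ℝ)) (T : (Fin d → ℝ) ⧸ S) : Set (Fin d → ℝ) :=
  {x | (Submodule.Quotient.mk x : (Fin d → ℝ) ⧸ S) = T}

/-- `F₁` and `F₂` have the same (discrete) X-ray parallel to `S`. -/
def XrayEq (S : Submodule ℝ (Fin d → ℝ)) (F₁ F₂ : Set (Fin d → ℝ)) : Prop :=
  ∀ T : (Fin d → ℝ) ⧸ S, (F₁ ∩ fiber S T).ncard = (F₂ ∩ fiber S T).ncard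

/-- `F₁` and `F₂` are tomographically equivalent w.r.t. the family `𝒮` of lines. -/
def TomEq (𝒮 : Set (Submodule ℝ (Fin d → ℝ))) (F₁ F₂ : Set (Fin d → ℝ)) : Prop :=
  ∀ S ∈ 𝒮, XrayEq S F₁ F₂

/-- A lattice line: a line through the origin spanned by a nonzero integer vector. -/
def IsLatticeLine (S : Submodule ℝ (Fin d → ℝ)) : Prop :=
  ∃ v : Fin d → ℤ, v ≠ 0 ∧ S = Submodule.span ℝ {fun i => (v i : ℝ)}

/-- The canonical embedding of `ℤ^d` into `ℝ^d`. -/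
def embed (x : Fin d → ℤ) : Fin d → ℝ := fun i => (x i : ℝ)

/-- The X-ray difference `Δ_𝒮(F₁,F₂)`. -/
noncomputable def xrayDiff (𝒮 : Set (Submodule ℝ (Fin d → ℝ))) (F₁ F₂ : Set (Fin d → ℝ)) : ℕ :=
  ∑ᶠ S ∈ 𝒮, ∑ᶠ T : (Fin d → ℝ) ⧸ S,
    (((F₁ ∩ fiber S T).ncard : ℤ) - ((F₂ ∩ fiber S T).ncard : ℤ)).natAbs

/-- A convex lattice set: `F = conv(F) ∩ ℤ^d`. -/
def IsConvexLatticeSet (F : Finset (Fin d → ℤ)) : Prop :=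
  embed '' ↑F = convexHull ℝ (embed '' ↑F) ∩ Set.range (embed : (Fin d → ℤ) → (Fin d → ℝ))


/-! The lines parallel to the lattice line `ℝ ∙ v` are the level sets of `x ↦ perp v ⬝ᵥ x`, where
`perp v` is `v` rotated by a right angle; so equal X-rays in direction `v` say exactly that the
multisets `Π_{perp v}(X)` and `Π_{perp v}(Y)` coincide. In particular `|X| = |Y|` and, for every
`j`, the binary form `c ↦ ∑_X (c ⬝ᵥ x)^j - ∑_Y (c ⬝ᵥ y)^j` of degree `j` vanishes at the `m + 1`
pairwise non-proportional vectors `perp v`. For `j ≤ m` the projective Vandermonde matrix of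
`j + 1` of them is nonsingular, so all coefficients of the form vanish and it is identically
zero. -/

open Matrix Finset

theorem Matrix.eq_zero_of_forall_sum_pow_mul_pow_mul_eq_zero {R : Type*} [CommRing R] [IsDomain R]
    {n : ℕ} {a b w : Fin n → R} (hab : Pairwise fun i l ↦ a i * b l ≠ a l * b i)
    (h : ∀ i, ∑ k : Fin n, a i ^ (k : ℕ) * b i ^ (k.rev : ℕ) * w k = 0) : w = 0 := by
  refine eq_zero_of_mulVec_eq_zero (M := projVandermonde a b) ?_ (funext h)
  rw [det_projVandermonde]
  exact prod_ne_zero_iff.2 fun i _ ↦ prod_ne_zero_iff.2 fun l hl ↦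
    sub_ne_zero.2 (hab (mem_Ioi.1 hl).ne')

theorem mem_span_singleton_iff_mul_eq_mul {K : Type*} [Field K] {v : Fin 2 → K} (hv : v ≠ 0)
    (u : Fin 2 → K) : u ∈ K ∙ v ↔ v 0 * u 1 = v 1 * u 0 := by
  rw [Submodule.mem_span_singleton]
  refine ⟨?_, fun h ↦ ?_⟩
  · rintro ⟨r, rfl⟩
    simp only [Pi.smul_apply, smul_eq_mul]
    ring
  have hv' : v 0 ≠ 0 ∨ v 1 ≠ 0 := by
    by_contra! h0
    exact hv (funext fun i ↦ by fin_cases i <;> simp [h0.1, h0.2])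
  rcases hv' with h0 | h1
  · refine ⟨u 0 / v 0, funext fun i ↦ ?_⟩
    fin_cases i
    · simp [h0]
    · simp; field_simp; linear_combination -h
  · refine ⟨u 1 / v 1, funext fun i ↦ ?_⟩
    fin_cases i
    · simp; field_simp; linear_combination h
    · simp [h1]

theorem span_singleton_eq_span_singleton_iff {K : Type*} [Field K] {v w : Fin 2 → K}
    (hv : v ≠ 0) (hw : w ≠ 0) : K ∙ v = K ∙ w ↔ v 0 * w 1 = v 1 * w 0 := by
  refine ⟨fun h ↦ (mem_span_singleton_iff_mul_eq_mul hv w).1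
    (h ▸ Submodule.mem_span_singleton_self w), fun h ↦ ?_⟩
  apply le_antisymm <;> rw [Submodule.span_singleton_le_iff_mem]
  · rw [mem_span_singleton_iff_mul_eq_mul hw]; linear_combination -h
  · rw [mem_span_singleton_iff_mul_eq_mul hv]; exact h

theorem sum_dotProduct_pow (X : Finset (Fin 2 → ℤ)) (c : Fin 2 → ℤ) (j : ℕ) :
    ∑ x ∈ X, (c ⬝ᵥ x) ^ j = ∑ k : Fin (j + 1), c 0 ^ (k : ℕ) * c 1 ^ (k.rev : ℕ) *
      (j.choose k * ∑ x ∈ X, x 0 ^ (k : ℕ) * x 1 ^ (k.rev : ℕ)) := by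
  simp only [Fin.val_rev, Nat.add_sub_add_right]
  rw [Fin.sum_univ_eq_sum_range (fun k ↦ c 0 ^ k * c 1 ^ (j - k) *
    (j.choose k * ∑ x ∈ X, x 0 ^ k * x 1 ^ (j - k)))]
  simp_rw [mul_sum, dotProduct, Fin.sum_univ_two, add_pow]
  rw [sum_comm]
  exact sum_congr rfl fun x _ ↦ sum_congr rfl fun k _ ↦ by ring

theorem sum_dotProduct_pow_eq_of_pairwise_independent {ι : Type*} {L : Finset ι}
    {u : ι → Fin 2 → ℤ} (hu : (L : Set ι).Pairwise fun i l ↦ u i 0 * u l 1 ≠ u l 0 * u i 1) {j : ℕ} (hj : j < #L)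
    {X Y : Finset (Fin 2 → ℤ)} (h : ∀ i ∈ L, ∑ x ∈ X, (u i ⬝ᵥ x) ^ j = ∑ y ∈ Y, (u i ⬝ᵥ y) ^ j)
    (c : Fin 2 → ℤ) : ∑ x ∈ X, (c ⬝ᵥ x) ^ j = ∑ y ∈ Y, (c ⬝ᵥ y) ^ j := by
  set w : Fin (j + 1) → ℤ := fun k ↦ j.choose k *
    (∑ x ∈ X, x 0 ^ (k : ℕ) * x 1 ^ (k.rev : ℕ) - ∑ y ∈ Y, y 0 ^ (k : ℕ) * y 1 ^ (k.rev : ℕ))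
  have hdiff : ∀ c : Fin 2 → ℤ, ∑ x ∈ X, (c ⬝ᵥ x) ^ j - ∑ y ∈ Y, (c ⬝ᵥ y) ^ j =
      ∑ k : Fin (j + 1), c 0 ^ (k : ℕ) * c 1 ^ (k.rev : ℕ) * w k := fun c ↦ by
    simp only [sum_dotProduct_pow, w, mul_sub, sum_sub_distrib]
  let e : Fin (j + 1) ↪ L := (Fin.castLEEmb hj).trans L.equivFin.symm.toEmbedding
  have hw : w = 0 := Matrix.eq_zero_of_forall_sum_pow_mul_pow_mul_eq_zero
    (a := fun k ↦ u (e k) 0) (b := fun k ↦ u (e k) 1)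
    (fun k l hkl ↦ hu (e k).2 (e l).2 (Subtype.coe_injective.ne (e.injective.ne hkl)))
    (fun k ↦ by rw [← hdiff, sub_eq_zero]; exact h _ (e k).2)
  rw [← sub_eq_zero, hdiff, hw]
  simp

theorem Finset.sum_comp_eq_of_map_val_eq {α β M : Type*} [AddCommMonoid M] {X Y : Finset α}
    {φ : α → β} (h : X.val.map φ = Y.val.map φ) (f : β → M) :
    ∑ x ∈ X, f (φ x) = ∑ y ∈ Y, f (φ y) := by
  simpa only [Multiset.map_map, Function.comp_def, ← sum_eq_multiset_sum]
    using congrArg (fun s ↦ (s.map f).sum) h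

theorem embed_injective : Function.Injective (embed : (Fin d → ℤ) → Fin d → ℝ) :=
  fun _ _ h ↦ funext fun i ↦ Int.cast_injective (congrFun h i)

theorem embed_zero : embed (0 : Fin d → ℤ) = 0 :=
  funext fun _ ↦ Int.cast_zero

theorem embed_ne_zero {v : Fin d → ℤ} (hv : v ≠ 0) : embed v ≠ 0 :=
  embed_zero (d := d) ▸ embed_injective.ne hv

def perp (v : Fin 2 → ℤ) : Fin 2 → ℤ := ![-v 1, v 0]

theorem perp_mul_ne_of_span_ne {v w : Fin 2 → ℤ} (hv : v ≠ 0) (hw : w ≠ 0)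
    (h : ℝ ∙ embed v ≠ ℝ ∙ embed w) : perp v 0 * perp w 1 ≠ perp w 0 * perp v 1 := by
  rw [Ne, span_singleton_eq_span_singleton_iff (embed_ne_zero hv) (embed_ne_zero hw)] at h
  simp only [perp, Matrix.cons_val_zero, Matrix.cons_val_one]
  simp only [embed] at h
  intro heq
  exact h (by exact_mod_cast (by linear_combination heq : v 0 * w 1 = v 1 * w 0))

theorem embed_mem_fiber_iff {v : Fin 2 → ℤ} (hv : v ≠ 0) (x z : Fin 2 → ℤ) :
    embed x ∈ fiber (ℝ ∙ embed v) (Submodule.Quotient.mk (embed z)) ↔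
      perp v ⬝ᵥ x = perp v ⬝ᵥ z := by
  rw [fiber, mem_ofPred_eq, Submodule.Quotient.eq,
    mem_span_singleton_iff_mul_eq_mul (embed_ne_zero hv), ← Int.cast_inj (α := ℝ)]
  simp only [embed, perp, dotProduct, Fin.sum_univ_two, Pi.sub_apply]
  push_cast
  constructor <;> intro h <;> linear_combination h

theorem ncard_image_embed_inter_fiber {v : Fin 2 → ℤ} (hv : v ≠ 0) (X : Finset (Fin 2 → ℤ))
    (z : Fin 2 → ℤ) :
    (embed '' ↑X ∩ fiber (ℝ ∙ embed v) (Submodule.Quotient.mk (embed z))).ncard =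
      (X.val.map (perp v ⬝ᵥ ·)).count (perp v ⬝ᵥ z) := by
  have : ↑X ∩ embed ⁻¹' fiber (ℝ ∙ embed v) (Submodule.Quotient.mk (embed z)) =
      ↑{x ∈ X | perp v ⬝ᵥ z = perp v ⬝ᵥ x} := by
    ext x
    simp [embed_mem_fiber_iff hv, eq_comm]
  rw [← image_inter_preimage, this, ncard_image_of_injective _ embed_injective, ncard_coe_finset,
    Multiset.count_map]
  rfl

theorem map_perp_dotProduct_eq_of_xrayEq {v : Fin 2 → ℤ} (hv : v ≠ 0) {X Y : Finset (Fin 2 → ℤ)}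
    (h : XrayEq (ℝ ∙ embed v) (embed '' ↑X) (embed '' ↑Y)) :
    X.val.map (perp v ⬝ᵥ ·) = Y.val.map (perp v ⬝ᵥ ·) := by
  ext t
  -- only levels attained by lattice points are read off the X-ray at `embed z`
  by_cases ht : t ∈ X.val.map (perp v ⬝ᵥ ·) ∨ t ∈ Y.val.map (perp v ⬝ᵥ ·)
  · rcases ht with ht | ht <;> obtain ⟨z, -, rfl⟩ := Multiset.mem_map.1 ht <;>
      rw [← ncard_image_embed_inter_fiber hv, ← ncard_image_embed_inter_fiber hv, h]
  · push Not at ht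
    rw [Multiset.count_eq_zero.2 ht.1, Multiset.count_eq_zero.2 ht.2]

theorem pte_from_switching_components_general
    (m : ℕ) (𝓛 : Finset (Submodule ℝ (Fin 2 → ℝ))) (hcard : 𝓛.card = m + 1)
    (h𝓛 : ∀ S ∈ 𝓛, IsLatticeLine S)
    (X Y : Finset (Fin 2 → ℤ))
    (h : TomEq (↑𝓛 : Set (Submodule ℝ (Fin 2 → ℝ))) (embed '' ↑X) (embed '' ↑Y)) :
    X.card = Y.card ∧
    ∀ c : Fin 2 → ℤ, ∀ j : ℕ, 1 ≤ j → j ≤ m →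
      ∑ x ∈ X, (c 0 * x 0 + c 1 * x 1) ^ j = ∑ y ∈ Y, (c 0 * y 0 + c 1 * y 1) ^ j := by
  choose! v hv hspan using h𝓛
  have hproj : ∀ S ∈ 𝓛, X.val.map (perp (v S) ⬝ᵥ ·) = Y.val.map (perp (v S) ⬝ᵥ ·) :=
    fun S hS ↦ map_perp_dotProduct_eq_of_xrayEq (hv S hS) (hspan S hS ▸ h S hS)
  have hdistinct : (𝓛 : Set _).Pairwise fun S T ↦
      perp (v S) 0 * perp (v T) 1 ≠ perp (v T) 0 * perp (v S) 1 := fun S hS T hT hST ↦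
    perp_mul_ne_of_span_ne (hv S hS) (hv T hT) (hspan S hS ▸ hspan T hT ▸ hST)
  obtain ⟨S₀, hS₀⟩ : 𝓛.Nonempty := card_pos.1 (by omega)
  refine ⟨by simpa using congrArg Multiset.card (hproj S₀ hS₀), fun c j _ hj ↦ ?_⟩
  have := sum_dotProduct_pow_eq_of_pairwise_independent hdistinct (by omega : j < #𝓛)
    (fun S hS ↦ sum_comp_eq_of_map_val_eq (hproj S hS) (· ^ j)) c
  simpa [dotProduct, Fin.sum_univ_two] using this

theorem pte_from_switching_components
    (m : ℕ) (𝓛 : Finset (Submodule ℝ (Fin 2 → ℝ))) (hcard : 𝓛.card = m + 1)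
    (h𝓛 : ∀ S ∈ 𝓛, IsLatticeLine S)
    (X Y : Finset (Fin 2 → ℤ)) (hXY : X ≠ Y)
    (h : TomEq (↑𝓛 : Set (Submodule ℝ (Fin 2 → ℝ))) (embed '' ↑X) (embed '' ↑Y)) :
    X.card = Y.card ∧
    ∀ c : Fin 2 → ℤ, ∀ j : ℕ, 1 ≤ j → j ≤ m →
      ∑ x ∈ X, (c 0 * x 0 + c 1 * x 1) ^ j = ∑ y ∈ Y, (c 0 * y 0 + c 1 * y 1) ^ j :=
  pte_from_switching_components_general m 𝓛 hcard h𝓛 X Y h
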